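/- arXiv:1609.05355 — 5 statements merged into one kernel-verified Lean document; each statement's English description precedes it below -/
import Mathlib

section
/- With J defined by the Bellman recursion, for every b ∈ {1,…,B} one has J(b,1) = J(b−1,V) + δ(b,1), and for every v ∈ {2,…,V} one has J(b,v) = J(b,v−1) + δ(b,v). -/
/-- `delta S hS c h r b v` is δ(b,v): δ(b,0) = 0 and
δ(b,v) = h(b) + min_{s ∈ S} (c(s) − s·(r(v) + Σ_{i=0}^{v−1} δ(b,i))). -/
noncomputable def delta (S : Finset ℝ) (hS : S.Nonempty) (c : ℝ → ℝ) (h r : ℕ → ℝ)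
    (b : ℕ) : ℕ → ℝ
  | 0 => 0
  | v + 1 => h b + S.inf' hS (fun s =>
      c s - s * (r (v + 1) + ∑ i ∈ (Finset.range (v + 1)).attach, delta S hS c h r b i.1))
decreasing_by exact Finset.mem_range.mp i.2

/-- `sigma S hS c h r b v` is σ(b,v) = Σ_{i=0}^{v} δ(b,i). -/
noncomputable def sigma (S : Finset ℝ) (hS : S.Nonempty) (c : ℝ → ℝ) (h r : ℕ → ℝ)
    (b v : ℕ) : ℝ :=
  ∑ i ∈ Finset.range (v + 1), delta S hS c h r b i

/-- `Jval S hS c h r V b v` is J(b,v) defined by the Bellman recursion: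
J(0,v) = 0 and for b ≥ 1,
J(b,v) = min_{s ∈ S} [c(s) + h(b) + s·(−r(v) + J(b−1,V))
  + (1−s)·(J(b,v−1) if v > 1 else J(b−1,V))]. -/
noncomputable def Jval (S : Finset ℝ) (hS : S.Nonempty) (c : ℝ → ℝ) (h r : ℕ → ℝ)
    (V : ℕ) : ℕ → ℕ → ℝ
  | 0, _ => 0
  | b + 1, v =>
    S.inf' hS (fun s =>
      c s + h (b + 1) + s * (-(r v) + Jval S hS c h r V b V) +
        (1 - s) * (if _hv : 1 < v then Jval S hS c h r V (b + 1) (v - 1)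
                   else Jval S hS c h r V b V))
termination_by b v => (b, v)
decreasing_by
  · exact Prod.Lex.left _ _ (Nat.lt_succ_self b)
  · exact Prod.Lex.right _ (by omega)

/-!
Unrolling the Bellman recursion in `v` gives the closed form J(b,v) = J(b−1,V) + σ(b,v) for
`v ≥ 1`. Indeed, if the continuation value J(b,v−1) (or J(b−1,V) when v = 1) equals
J(b−1,V) + σ(b,v−1), then the term minimised over `s` is
`c s − s·(r v + σ(b,v−1))` plus a constant independent of `s`, so the minimum is that constant
plus `δ(b,v) − h b`, which is exactly J(b−1,V) + σ(b,v). Both identities follow by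
differencing.
-/

theorem Finset.inf'_add {ι α : Type*} [LinearOrder α] [AddGroup α] [AddRightMono α]
    (s : Finset ι) (f : ι → α) (a : α) (hs : s.Nonempty) :
    s.inf' hs f + a = s.inf' hs fun i => f i + a :=
  map_finset_inf' (OrderIso.addRight a) hs f

section BellmanClosedForm

variable (S : Finset ℝ) (hS : S.Nonempty) (c : ℝ → ℝ) (h r : ℕ → ℝ)

theorem delta_succ (b v : ℕ) :
    delta S hS c h r b (v + 1)
      = h b + S.inf' hS (fun s => c s - s * (r (v + 1) + sigma S hS c h r b v)) := by
  rw [delta, sigma]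
  simp only [Finset.sum_attach (Finset.range (v + 1)) (delta S hS c h r b)]

theorem sigma_zero (b : ℕ) : sigma S hS c h r b 0 = 0 := by
  simp [sigma, delta]

theorem sigma_succ (b v : ℕ) :
    sigma S hS c h r b (v + 1) = sigma S hS c h r b v + delta S hS c h r b (v + 1) :=
  Finset.sum_range_succ _ _

theorem Jval_succ_succ (V b v : ℕ) :
    Jval S hS c h r V (b + 1) (v + 1) = S.inf' hS (fun s =>
      c s + h (b + 1) + s * (-(r (v + 1)) + Jval S hS c h r V b V) +
        (1 - s) * (if v = 0 then Jval S hS c h r V b V else Jval S hS c h r V (b + 1) v)) := by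
  rw [Jval]
  refine Finset.inf'_congr hS rfl fun s _ => ?_
  rcases v with _ | v <;> simp

theorem Jval_succ_succ_eq_add_sigma_of_continuation (V b v : ℕ)
    (hcont : (if v = 0 then Jval S hS c h r V b V else Jval S hS c h r V (b + 1) v)
      = Jval S hS c h r V b V + sigma S hS c h r (b + 1) v) :
    Jval S hS c h r V (b + 1) (v + 1)
      = Jval S hS c h r V b V + sigma S hS c h r (b + 1) (v + 1) := by
  have hterm : ∀ s ∈ S,
      c s + h (b + 1) + s * (-(r (v + 1)) + Jval S hS c h r V b V)
          + (1 - s) * (Jval S hS c h r V b V + sigma S hS c h r (b + 1) v)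
        = (c s - s * (r (v + 1) + sigma S hS c h r (b + 1) v))
          + (Jval S hS c h r V b V + sigma S hS c h r (b + 1) v + h (b + 1)) :=
    fun s _ => by ring
  rw [Jval_succ_succ, hcont, Finset.inf'_congr hS rfl hterm, ← Finset.inf'_add,
    sigma_succ, delta_succ]
  ring

theorem Jval_succ_succ_eq_add_sigma (V b v : ℕ) :
    Jval S hS c h r V (b + 1) (v + 1)
      = Jval S hS c h r V b V + sigma S hS c h r (b + 1) (v + 1) := by
  induction v with
  | zero =>
    exact Jval_succ_succ_eq_add_sigma_of_continuation S hS c h r V b 0 (by simp [sigma_zero])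
  | succ v ih =>
    exact Jval_succ_succ_eq_add_sigma_of_continuation S hS c h r V b (v + 1) (by simp [ih])

end BellmanClosedForm

theorem stmt0_general
    (S : Finset ℝ) (hS : S.Nonempty)
    (c : ℝ → ℝ)
    (h : ℕ → ℝ)
    (r : ℕ → ℝ)
    (B V : ℕ)
    :
    ∀ b, 1 ≤ b → b ≤ B →
      (Jval S hS c h r V b 1 = Jval S hS c h r V (b - 1) V + delta S hS c h r b 1) ∧
      (∀ v, 2 ≤ v → v ≤ V →
        Jval S hS c h r V b v = Jval S hS c h r V b (v - 1) + delta S hS c h r b v) := by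
  intro b hb _
  obtain ⟨b, rfl⟩ : ∃ b', b = b' + 1 := ⟨b - 1, by omega⟩
  have closed_form := Jval_succ_succ_eq_add_sigma S hS c h r V b
  refine ⟨?_, fun v hv _ => ?_⟩
  · simp [closed_form 0, sigma_succ, sigma_zero]
  · obtain ⟨w, rfl⟩ : ∃ w, v = w + 2 := ⟨v - 2, by omega⟩
    rw [show w + 2 - 1 = w + 1 from rfl, closed_form (w + 1), closed_form w, sigma_succ]
    ring

/-- With J defined by the Bellman recursion, for every b ∈ {1,…,B}:
J(b,1) = J(b−1,V) + δ(b,1), and for every v ∈ {2,…,V}: J(b,v) = J(b,v−1) + δ(b,v). -/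
theorem stmt0
    (S : Finset ℝ) (hS : S.Nonempty) (hS01 : ∀ s ∈ S, s ∈ Set.Icc (0 : ℝ) 1)
    (c : ℝ → ℝ) (hc0 : ∀ s ∈ S, 0 ≤ c s)
    (hcmono : ∀ s ∈ S, ∀ s' ∈ S, s ≤ s' → c s ≤ c s')
    (h : ℕ → ℝ) (hh0 : ∀ b, 0 ≤ h b) (hhmono : Monotone h)
    (r : ℕ → ℝ) (hrmono : Monotone r) (hr0 : r 0 = 0) (hrpos : ∀ v, 1 ≤ v → 0 < r v)
    (B V : ℕ) (hB : 0 < B) (hV : 0 < V)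
    :
    ∀ b, 1 ≤ b → b ≤ B →
      (Jval S hS c h r V b 1 = Jval S hS c h r V (b - 1) V + delta S hS c h r b 1) ∧
      (∀ v, 2 ≤ v → v ≤ V →
        Jval S hS c h r V b v = Jval S hS c h r V b (v - 1) + delta S hS c h r b v) :=
  stmt0_general S hS c h r B V
end

section
/- Let D1 be a nonempty finite set of real numbers, let D2 be a nonempty set of real numbers, and let f : D1 × D2 → ℝ be submodular, i.e., f(d1⁺, d2⁺) + f(d1⁻, d2⁻) ≤ f(d1⁺, d2⁻) + f(d1⁻, d2⁺) for all d1⁻ ≤ d1⁺ in D1 and d2⁻ ≤ d2⁺ in D2. Define g : D2 → D1 by g(d2) = the least element of the set of minimizers over d1 ∈ D1 of f(d1, d2). Then g is non-decreasing. -/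
open Classical

variable {α β M : Type*} [LinearOrder α] [Preorder β]
  [AddCommMonoid M] [LinearOrder M] [IsOrderedCancelAddMonoid M]

def IsSubmodularOn (f : α → β → M) (s : Set α) (t : Set β) : Prop :=
  ∀ a₁ ∈ s, ∀ a₂ ∈ s, ∀ b₁ ∈ t, ∀ b₂ ∈ t, a₁ ≤ a₂ → b₁ ≤ b₂ →
    f a₂ b₂ + f a₁ b₁ ≤ f a₂ b₁ + f a₁ b₂

theorem IsSubmodularOn.le_of_isLeast_of_isMinOn {f : α → β → M} {s : Set α} {t : Set β}
    (hf : IsSubmodularOn f s t) {x y : β} (hx : x ∈ t) (hy : y ∈ t) (hxy : x ≤ y) {a b : α}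
    (ha : IsLeast {d ∈ s | IsMinOn (f · x) s d} a) (hb : b ∈ {d ∈ s | IsMinOn (f · y) s d}) :
    a ≤ b := by
  obtain ⟨⟨has, ha_min⟩, ha_least⟩ := ha
  obtain ⟨hbs, hb_min⟩ := hb
  by_contra! hba
  -- Submodularity at `b < a`, `x ≤ y` and minimality of `b` at `y` make `b` a minimizer at `x`.
  have hbx : f b x ≤ f a x := by
    refine le_of_add_le_add_left (a := f a y) ?_
    calc f a y + f b x ≤ f a x + f b y := hf b hbs a has x hx y hy hba.le hxy
      _ ≤ f a x + f a y := add_le_add le_rfl (hb_min has)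
      _ = f a y + f a x := add_comm _ _
  have hb_min_x : IsMinOn (f · x) s b := fun e he => hbx.trans (ha_min he)
  exact hba.not_ge (ha_least ⟨hbs, hb_min_x⟩)

/-- Topkis-type lemma: if f is submodular on D1 × D2 (D1 a nonempty finite set of reals,
D2 a nonempty set of reals), then g(d2) = least minimizer over d1 ∈ D1 of f(d1, d2)
is non-decreasing in d2. -/
theorem stmt2
    (D1 : Finset ℝ) (hD1 : D1.Nonempty) (D2 : Set ℝ)
    (f : ℝ → ℝ → ℝ)
    (hsub : ∀ d1m ∈ D1, ∀ d1p ∈ D1, ∀ d2m ∈ D2, ∀ d2p ∈ D2,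
      d1m ≤ d1p → d2m ≤ d2p →
        f d1p d2p + f d1m d2m ≤ f d1p d2m + f d1m d2p) :
    ∀ d2 ∈ D2, ∀ d2' ∈ D2, d2 ≤ d2' →
      (D1.filter (fun d1 => ∀ e ∈ D1, f d1 d2 ≤ f e d2)).min'
        (by
          obtain ⟨d, hd, hmin⟩ := D1.exists_min_image (fun e => f e d2) hD1
          exact ⟨d, Finset.mem_filter.mpr ⟨hd, fun e he => hmin e he⟩⟩) ≤
      (D1.filter (fun d1 => ∀ e ∈ D1, f d1 d2' ≤ f e d2')).min'
        (by
          obtain ⟨d, hd, hmin⟩ := D1.exists_min_image (fun e => f e d2') hD1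
          exact ⟨d, Finset.mem_filter.mpr ⟨hd, fun e he => hmin e he⟩⟩) := by
  intro d2 hd2 d2' hd2' hle
  generalize_proofs hne hne'
  have ha := Finset.isLeast_min' _ hne
  have hb := (Finset.isLeast_min' _ hne').1
  rw [Finset.coe_filter] at ha hb
  -- `IsMinOn (f · d) D1` unfolds to the filter condition `∀ e ∈ D1, f · d ≤ f e d`.
  exact IsSubmodularOn.le_of_isLeast_of_isMinOn hsub hd2 hd2' hle ha hb
end

section
/- The function g : ℝ → S defined by g(x) = the least element of the set of minimizers over s ∈ S of c(s) − s·x is non-decreasing: x ≤ x' implies g(x) ≤ g(x'). -/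
open Classical

/-- `gmin S hS c x` = the least element of the set of minimizers over s ∈ S of c(s) − s·x. -/
noncomputable def gmin (S : Finset ℝ) (hS : S.Nonempty) (c : ℝ → ℝ) (x : ℝ) : ℝ :=
  (S.filter (fun s => ∀ s' ∈ S, c s - s * x ≤ c s' - s' * x)).min'
    (by
      obtain ⟨s, hs, hmin⟩ := S.exists_min_image (fun s => c s - s * x) hS
      exact ⟨s, Finset.mem_filter.mpr ⟨hs, fun s' hs' => hmin s' hs'⟩⟩)

/-- μ(b,v) = g(r(v) + σ(b,v−1)). -/
noncomputable def mu (S : Finset ℝ) (hS : S.Nonempty) (c : ℝ → ℝ) (h r : ℕ → ℝ)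
    (b v : ℕ) : ℝ :=
  gmin S hS c (r v + sigma S hS c h r b (v - 1))

theorem le_of_isMinOn_sub_mul {R : Type*} [CommRing R] [LinearOrder R] [IsStrictOrderedRing R]
    {S : Set R} {c : R → R} {x x' a a' : R} (hxx : x < x')
    (ha : IsMinOn (fun s => c s - s * x) S a) (ha' : IsMinOn (fun s => c s - s * x') S a')
    (haS : a ∈ S) (ha'S : a' ∈ S) : a ≤ a' := by
  have h : c a - a * x ≤ c a' - a' * x := ha ha'S
  have h' : c a' - a' * x' ≤ c a - a * x' := ha' haS
  -- adding the two optimality inequalities gives (a' - a) * (x' - x) ≥ 0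
  nlinarith

theorem gmin_mem_filter (S : Finset ℝ) (hS : S.Nonempty) (c : ℝ → ℝ) (x : ℝ) :
    gmin S hS c x ∈ S.filter (fun s => ∀ s' ∈ S, c s - s * x ≤ c s' - s' * x) :=
  Finset.min'_mem _ _

theorem gmin_mem (S : Finset ℝ) (hS : S.Nonempty) (c : ℝ → ℝ) (x : ℝ) :
    gmin S hS c x ∈ S :=
  (Finset.mem_filter.mp (gmin_mem_filter S hS c x)).1

theorem isMinOn_gmin (S : Finset ℝ) (hS : S.Nonempty) (c : ℝ → ℝ) (x : ℝ) :
    IsMinOn (fun s => c s - s * x) S (gmin S hS c x) :=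
  fun s hs => (Finset.mem_filter.mp (gmin_mem_filter S hS c x)).2 s hs

theorem stmt4_general
    (S : Finset ℝ) (hS : S.Nonempty)
    (c : ℝ → ℝ) :
    ∀ x x' : ℝ, x ≤ x' → gmin S hS c x ≤ gmin S hS c x' := by
  intro x x' hxx
  rcases hxx.eq_or_lt with rfl | hlt
  · exact le_rfl
  · exact le_of_isMinOn_sub_mul hlt (isMinOn_gmin S hS c x) (isMinOn_gmin S hS c x')
      (gmin_mem S hS c x) (gmin_mem S hS c x')

/-- g(x) = least minimizer over s ∈ S of c(s) − s·x is non-decreasing. -/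
theorem stmt4
    (S : Finset ℝ) (hS : S.Nonempty) (hS01 : ∀ s ∈ S, s ∈ Set.Icc (0 : ℝ) 1)
    (c : ℝ → ℝ) (hc0 : ∀ s ∈ S, 0 ≤ c s)
    (hcmono : ∀ s ∈ S, ∀ s' ∈ S, s ≤ s' → c s ≤ c s') :
    ∀ x x' : ℝ, x ≤ x' → gmin S hS c x ≤ gmin S hS c x' :=
  stmt4_general S hS c
end

section
/- For every b ∈ {1,…,B} and v ∈ {1,…,V}, the function T_{b,v} : ℝ → ℝ is non-decreasing: x⁻ ≤ x⁺ implies T_{b,v}(x⁻) ≤ T_{b,v}(x⁺). -/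
/-! Adding `x` to `min_s (c s - s (r + x))` gives the minimum of the affine maps
`x ↦ c s - s r + (1 - s) x`, each non-decreasing because `s ≤ 1`; a pointwise minimum of
non-decreasing maps is non-decreasing. -/

namespace Finset

theorem monotone_inf' {ι α β : Type*} [Preorder α] [SemilatticeInf β] (s : Finset ι)
    (H : s.Nonempty) {f : ι → α → β} (hf : ∀ i ∈ s, Monotone (f i)) :
    Monotone fun x => s.inf' H fun i => f i x := fun _ _ hxy =>
  le_inf' H _ fun i hi => (inf'_le _ hi).trans (hf i hi hxy)

theorem add_inf' {ι α : Type*} [AddCommGroup α] [LinearOrder α] [IsOrderedAddMonoid α]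
    (s : Finset ι) (H : s.Nonempty) (f : ι → α) (a : α) :
    a + s.inf' H f = s.inf' H fun i => a + f i :=
  apply_inf'_eq_inf'_comp H (a + ·) fun _ _ => (min_add_add_left _ _ _).symm

end Finset

theorem monotone_add_sub_mul_add {s : ℝ} (hs : s ≤ 1) (a t : ℝ) :
    Monotone fun x => x + (a - s * (t + x)) := fun _ _ _ => by
  nlinarith

theorem stmt5_general
    (S : Finset ℝ) (hS : S.Nonempty) (hS01 : ∀ s ∈ S, s ∈ Set.Icc (0 : ℝ) 1)
    (c : ℝ → ℝ)
    (h : ℕ → ℝ)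
    (r : ℕ → ℝ)
    (B V : ℕ)
    :
    ∀ b, 1 ≤ b → b ≤ B → ∀ v, 1 ≤ v → v ≤ V →
      ∀ x y : ℝ, x ≤ y →
        x + h b + S.inf' hS (fun s => c s - s * (r v + x)) ≤
        y + h b + S.inf' hS (fun s => c s - s * (r v + y)) := by
  intro b _ _ v _ _ x y hxy
  have hmono : Monotone fun x => S.inf' hS fun s => x + (c s - s * (r v + x)) :=
    S.monotone_inf' hS fun s hs => monotone_add_sub_mul_add (hS01 s hs).2 (c s) (r v)
  rw [add_right_comm x, add_right_comm y, S.add_inf' hS, S.add_inf' hS]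
  exact add_le_add (hmono hxy) le_rfl

/-- For b ∈ {1,…,B}, v ∈ {1,…,V}, T_{b,v}(x) = x + h(b) + min_{s∈S}(c(s) − s·(r(v)+x))
is non-decreasing in x. -/
theorem stmt5
    (S : Finset ℝ) (hS : S.Nonempty) (hS01 : ∀ s ∈ S, s ∈ Set.Icc (0 : ℝ) 1)
    (c : ℝ → ℝ) (hc0 : ∀ s ∈ S, 0 ≤ c s)
    (hcmono : ∀ s ∈ S, ∀ s' ∈ S, s ≤ s' → c s ≤ c s')
    (h : ℕ → ℝ) (hh0 : ∀ b, 0 ≤ h b) (hhmono : Monotone h)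
    (r : ℕ → ℝ) (hrmono : Monotone r) (hr0 : r 0 = 0) (hrpos : ∀ v, 1 ≤ v → 0 < r v)
    (B V : ℕ) (hB : 0 < B) (hV : 0 < V)
    :
    ∀ b, 1 ≤ b → b ≤ B → ∀ v, 1 ≤ v → v ≤ V →
      ∀ x y : ℝ, x ≤ y →
        x + h b + S.inf' hS (fun s => c s - s * (r v + x)) ≤
        y + h b + S.inf' hS (fun s => c s - s * (r v + y)) :=
  stmt5_general S hS hS01 c h r B V
end

section
/- Fix b ∈ {1,…,B} and v ∈ {1,…,V−1}. If δ(b,v) ≥ −(r(v+1) − r(v)), then μ(b,v+1) ≥ μ(b,v). If δ(b,v) ≤ −(r(v+1) − r(v)), then μ(b,v+1) ≤ μ(b,v). -/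
open Classical

theorem gmin_mem_and_le (S : Finset ℝ) (hS : S.Nonempty) (c : ℝ → ℝ) (x : ℝ) :
    gmin S hS c x ∈ S ∧ ∀ s ∈ S, c (gmin S hS c x) - gmin S hS c x * x ≤ c s - s * x :=
  Finset.mem_filter.mp (Finset.min'_mem _ _)

/-- Adding the minimality inequalities of `gmin x` at `x` and of `gmin y` at `y` gives
`(gmin x - gmin y) * (y - x) ≤ 0`; for `x = y` the tie is broken by taking the least minimizer. -/
theorem gmin_monotone (S : Finset ℝ) (hS : S.Nonempty) (c : ℝ → ℝ) :
    Monotone (gmin S hS c) := by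
  intro x y hxy
  rcases hxy.eq_or_lt with rfl | hlt
  · exact le_rfl
  obtain ⟨hxS, hx⟩ := gmin_mem_and_le S hS c x
  obtain ⟨hyS, hy⟩ := gmin_mem_and_le S hS c y
  by_contra! hgt
  nlinarith [hx _ hyS, hy _ hxS]

/-- Because `δ(b,0) = 0`, this also holds at `v = 0`, where `v - 1` truncates to `0`. -/
theorem sigma_eq_sigma_pred_add_delta (S : Finset ℝ) (hS : S.Nonempty) (c : ℝ → ℝ)
    (h r : ℕ → ℝ) (b v : ℕ) :
    sigma S hS c h r b v = sigma S hS c h r b (v - 1) + delta S hS c h r b v := by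
  cases v with
  | zero => simp [delta]
  | succ v => simp only [sigma, Nat.add_sub_cancel, Finset.sum_range_succ _ (v + 1)]

theorem stmt9_general
    (S : Finset ℝ) (hS : S.Nonempty)
    (c : ℝ → ℝ)
    (h : ℕ → ℝ)
    (r : ℕ → ℝ)
    (b : ℕ)
    (v : ℕ) :
    (delta S hS c h r b v ≥ -(r (v + 1) - r v) →
      mu S hS c h r b (v + 1) ≥ mu S hS c h r b v) ∧
    (delta S hS c h r b v ≤ -(r (v + 1) - r v) →
      mu S hS c h r b (v + 1) ≤ mu S hS c h r b v) := by
  have hstep : r (v + 1) + sigma S hS c h r b v =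
      (r v + sigma S hS c h r b (v - 1)) + (delta S hS c h r b v + (r (v + 1) - r v)) := by
    rw [sigma_eq_sigma_pred_add_delta]
    ring
  have hmu_succ : mu S hS c h r b (v + 1) = gmin S hS c (r (v + 1) + sigma S hS c h r b v) :=
    rfl
  rw [hmu_succ, mu]
  exact ⟨fun hd => gmin_monotone S hS c (by linarith),
    fun hd => gmin_monotone S hS c (by linarith)⟩

/-- Fix b ∈ {1,…,B}, v ∈ {1,…,V−1}. If δ(b,v) ≥ −(r(v+1) − r(v)) then μ(b,v+1) ≥ μ(b,v);
if δ(b,v) ≤ −(r(v+1) − r(v)) then μ(b,v+1) ≤ μ(b,v). -/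
theorem stmt9
    (S : Finset ℝ) (hS : S.Nonempty) (hS01 : ∀ s ∈ S, s ∈ Set.Icc (0 : ℝ) 1)
    (c : ℝ → ℝ) (hc0 : ∀ s ∈ S, 0 ≤ c s)
    (hcmono : ∀ s ∈ S, ∀ s' ∈ S, s ≤ s' → c s ≤ c s')
    (h : ℕ → ℝ) (hh0 : ∀ b, 0 ≤ h b) (hhmono : Monotone h)
    (r : ℕ → ℝ) (hrmono : Monotone r) (hr0 : r 0 = 0) (hrpos : ∀ v, 1 ≤ v → 0 < r v)
    (B V : ℕ) (hB : 0 < B) (hV : 0 < V)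
    (b : ℕ) (hb1 : 1 ≤ b) (hbB : b ≤ B)
    (v : ℕ) (hv1 : 1 ≤ v) (hvV : v + 1 ≤ V) :
    (delta S hS c h r b v ≥ -(r (v + 1) - r v) →
      mu S hS c h r b (v + 1) ≥ mu S hS c h r b v) ∧
    (delta S hS c h r b v ≤ -(r (v + 1) - r v) →
      mu S hS c h r b (v + 1) ≤ mu S hS c h r b v) :=
  stmt9_general S hS c h r b v
end
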